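/- Let X_1, …, X_m and Y_1, …, Y_m be random variables taking values in [0,1] such that the X_k are i.i.d. with mean μ*, the Y_k are i.i.d. with mean μ′, the whole family is independent, and Δ = μ* − μ′ satisfies Δ ≥ d > 0. Define the recommended arm to be the suboptimal one exactly when (1/m)∑Y_k ≥ (1/m)∑X_k, and define the simple regret to be Δ if the suboptimal arm is recommended and 0 otherwise. Then the expected simple regret is Δ·P( (1/m)∑Y_k ≥ (1/m)∑X_k ) ≤ Δ·exp(−d² m); in particular, the expected simple regret decreases exponentially in the number of samples m. -/

import Mathlib

/-!
The regret is `Δ` times the indicator of the event `∑ X ≤ ∑ Y`. On that event the `2m` independent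
centred variables `μ* - X k` and `Y k - μ'` sum to at least `m Δ`; by Hoeffding's lemma each is
sub-Gaussian with variance proxy `1/4`, so Hoeffding's inequality bounds its probability by
`exp (-(m Δ)² / (2 · 2m · 1/4)) = exp (-m Δ²) ≤ exp (-m d²)`.
-/

open MeasureTheory ProbabilityTheory Real

namespace ProbabilityTheory

variable {Ω : Type*} [MeasurableSpace Ω] {μ : Measure Ω}

lemma integral_ite_const_zero (p : Ω → Prop) [DecidablePred p]
    (hp : MeasurableSet {ω | p ω}) (c : ℝ) :
    ∫ ω, (if p ω then c else 0) ∂μ = c * μ.real {ω | p ω} := by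
  calc ∫ ω, (if p ω then c else 0) ∂μ = ∫ ω, {ω | p ω}.indicator (fun _ ↦ c) ω ∂μ := by
        congr with ω
        simp [Set.indicator_apply]
    _ = c * μ.real {ω | p ω} := by rw [integral_indicator_const c hp, smul_eq_mul, mul_comm]

lemma hasSubgaussianMGF_sub_integral_of_mem_Icc_zero_one [IsProbabilityMeasure μ] {X : Ω → ℝ}
    (hm : AEMeasurable X μ) (hb : ∀ᵐ ω ∂μ, X ω ∈ Set.Icc (0 : ℝ) 1) :
    HasSubgaussianMGF (fun ω ↦ X ω - μ[X]) (1 / 4) μ := by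
  convert hasSubgaussianMGF_of_mem_Icc hm hb
  norm_num

lemma measureReal_sum_le_sum_le_exp [IsProbabilityMeasure μ] {ι : Type*} [Fintype ι]
    {X Y : ι → Ω → ℝ} {a b : ℝ}
    (hmeasX : ∀ i, AEMeasurable (X i) μ) (hmeasY : ∀ i, AEMeasurable (Y i) μ)
    (hXrange : ∀ i, ∀ᵐ ω ∂μ, X i ω ∈ Set.Icc (0 : ℝ) 1)
    (hYrange : ∀ i, ∀ᵐ ω ∂μ, Y i ω ∈ Set.Icc (0 : ℝ) 1)
    (hXmean : ∀ i, μ[X i] = a) (hYmean : ∀ i, μ[Y i] = b)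
    (hindep : iIndepFun (Sum.elim X Y) μ) (hba : b ≤ a) :
    μ.real {ω | ∑ i, X i ω ≤ ∑ i, Y i ω} ≤ exp (-(a - b) ^ 2 * Fintype.card ι) := by
  let g : ι ⊕ ι → ℝ → ℝ := Sum.elim (fun _ x ↦ a - x) (fun _ x ↦ x - b)
  let W : ι ⊕ ι → Ω → ℝ := fun j ↦ g j ∘ Sum.elim X Y j
  have hW_indep : iIndepFun W μ :=
    hindep.comp g (by rintro (i | i) <;> simp only [g, Sum.elim_inl, Sum.elim_inr] <;> fun_prop)
  have hW_subG : ∀ j ∈ Finset.univ, HasSubgaussianMGF (W j) (1 / 4 : NNReal) μ := by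
    rintro (i | i) -
    · refine (hasSubgaussianMGF_sub_integral_of_mem_Icc_zero_one (hmeasX i) (hXrange i)).neg.congr
        (ae_of_all _ fun ω ↦ ?_)
      simp [W, g, hXmean i]
    · refine (hasSubgaussianMGF_sub_integral_of_mem_Icc_zero_one (hmeasY i) (hYrange i)).congr
        (ae_of_all _ fun ω ↦ ?_)
      simp [W, g, hYmean i]
  have h_event : {ω | ∑ i, X i ω ≤ ∑ i, Y i ω}
      ⊆ {ω | Fintype.card ι * (a - b) ≤ ∑ j, W j ω} := by
    intro ω hω
    simp only [Set.mem_ofPred_eq, Fintype.sum_sum_type, W, g, Function.comp_apply,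
      Sum.elim_inl, Sum.elim_inr, Finset.sum_sub_distrib, Finset.sum_const, Finset.card_univ,
      nsmul_eq_mul] at hω ⊢
    linarith
  have hε : 0 ≤ (Fintype.card ι : ℝ) * (a - b) := mul_nonneg (Nat.cast_nonneg _) (sub_nonneg.2 hba)
  calc μ.real {ω | ∑ i, X i ω ≤ ∑ i, Y i ω}
      ≤ μ.real {ω | Fintype.card ι * (a - b) ≤ ∑ j, W j ω} := measureReal_mono h_event
    _ ≤ exp (-(Fintype.card ι * (a - b)) ^ 2 /
          (2 * ∑ j : ι ⊕ ι, (1 / 4 : NNReal))) :=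
        HasSubgaussianMGF.measure_sum_ge_le_of_iIndepFun hW_indep hW_subG hε
    _ = exp (-(a - b) ^ 2 * Fintype.card ι) := by
        congr 1
        simp only [Finset.sum_const, Finset.card_univ, Fintype.card_sum, nsmul_eq_mul]
        push_cast
        rcases eq_or_ne (Fintype.card ι : ℝ) 0 with hn | hn
        · simp [hn]
        · field_simp
          ring

end ProbabilityTheory

theorem expected_simple_regret_two_arms_general
    {Ω : Type*} [MeasurableSpace Ω] (μ : Measure Ω) [IsProbabilityMeasure μ]
    (m : ℕ) (hm : 0 < m)
    (X Y : Fin m → Ω → ℝ)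
    (μstar μ' d : ℝ) (hd : 0 < d)
    (hmeasX : ∀ k, Measurable (X k)) (hmeasY : ∀ k, Measurable (Y k))
    (hXrange : ∀ k, ∀ᵐ ω ∂μ, X k ω ∈ Set.Icc (0 : ℝ) 1)
    (hYrange : ∀ k, ∀ᵐ ω ∂μ, Y k ω ∈ Set.Icc (0 : ℝ) 1)
    (hXmean : ∀ k, ∫ ω, X k ω ∂μ = μstar)
    (hYmean : ∀ k, ∫ ω, Y k ω ∂μ = μ')
    (hindep : iIndepFun (Sum.elim X Y) μ)
    (hgap : d ≤ μstar - μ') :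
    (∫ ω, (if (1 / m : ℝ) * ∑ k, X k ω ≤ (1 / m : ℝ) * ∑ k, Y k ω
            then μstar - μ' else 0) ∂μ)
        = (μstar - μ') *
            (μ {ω | (1 / m : ℝ) * ∑ k, X k ω ≤ (1 / m : ℝ) * ∑ k, Y k ω}).toReal ∧
    (∫ ω, (if (1 / m : ℝ) * ∑ k, X k ω ≤ (1 / m : ℝ) * ∑ k, Y k ω
            then μstar - μ' else 0) ∂μ)
        ≤ (μstar - μ') * Real.exp (-d ^ 2 * m) := by
  have h_meas : MeasurableSet {ω | (1 / m : ℝ) * ∑ k, X k ω ≤ (1 / m : ℝ) * ∑ k, Y k ω} :=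
    measurableSet_le (by fun_prop) (by fun_prop)
  have h_regret := integral_ite_const_zero (μ := μ)
    (fun ω ↦ (1 / m : ℝ) * ∑ k, X k ω ≤ (1 / m : ℝ) * ∑ k, Y k ω) h_meas (μstar - μ')
  refine ⟨h_regret, ?_⟩
  have h_event : {ω | (1 / m : ℝ) * ∑ k, X k ω ≤ (1 / m : ℝ) * ∑ k, Y k ω}
      = {ω | ∑ k, X k ω ≤ ∑ k, Y k ω} := by
    ext ω
    exact mul_le_mul_iff_right₀ (one_div_pos.2 (Nat.cast_pos.2 hm : (0 : ℝ) < m))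
  have h_prob := measureReal_sum_le_sum_le_exp (fun k ↦ (hmeasX k).aemeasurable)
    (fun k ↦ (hmeasY k).aemeasurable) hXrange hYrange hXmean hYmean hindep (by linarith)
  rw [Fintype.card_fin] at h_prob
  have hΔ : 0 ≤ μstar - μ' := by linarith
  rw [h_regret, h_event]
  gcongr
  exact h_prob.trans (by gcongr)

/-- Two-arm simple regret: `X 1, …, X m` are the i.i.d. rewards of an optimal arm (mean
`μ*`), `Y 1, …, Y m` the i.i.d. rewards of a suboptimal arm (mean `μ'`), all in `[0,1]`,
with the whole family independent and `Δ = μ* - μ' ≥ d > 0`. The suboptimal arm is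
recommended exactly when its empirical mean is at least that of the optimal arm, and the
simple regret is `Δ` in that case and `0` otherwise. Then the expected simple regret
equals `Δ · P(empirical mean of Y ≥ empirical mean of X)` and is at most
`Δ · exp (-d² m)`. -/
theorem expected_simple_regret_two_arms
    {Ω : Type*} [MeasurableSpace Ω] (μ : Measure Ω) [IsProbabilityMeasure μ]
    (m : ℕ) (hm : 0 < m)
    (X Y : Fin m → Ω → ℝ)
    (μstar μ' d : ℝ) (hd : 0 < d)
    (hmeasX : ∀ k, Measurable (X k)) (hmeasY : ∀ k, Measurable (Y k))
    (hXrange : ∀ k, ∀ᵐ ω ∂μ, X k ω ∈ Set.Icc (0 : ℝ) 1)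
    (hYrange : ∀ k, ∀ᵐ ω ∂μ, Y k ω ∈ Set.Icc (0 : ℝ) 1)
    (hXident : ∀ k k', IdentDistrib (X k) (X k') μ μ)
    (hYident : ∀ k k', IdentDistrib (Y k) (Y k') μ μ)
    (hXmean : ∀ k, ∫ ω, X k ω ∂μ = μstar)
    (hYmean : ∀ k, ∫ ω, Y k ω ∂μ = μ')
    (hindep : iIndepFun (Sum.elim X Y) μ)
    (hgap : d ≤ μstar - μ') :
    (∫ ω, (if (1 / m : ℝ) * ∑ k, X k ω ≤ (1 / m : ℝ) * ∑ k, Y k ω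
            then μstar - μ' else 0) ∂μ)
        = (μstar - μ') *
            (μ {ω | (1 / m : ℝ) * ∑ k, X k ω ≤ (1 / m : ℝ) * ∑ k, Y k ω}).toReal ∧
    (∫ ω, (if (1 / m : ℝ) * ∑ k, X k ω ≤ (1 / m : ℝ) * ∑ k, Y k ω
            then μstar - μ' else 0) ∂μ)
        ≤ (μstar - μ') * Real.exp (-d ^ 2 * m) :=
  expected_simple_regret_two_arms_general μ m hm X Y μstar μ' d hd hmeasX hmeasY hXrange hYrange
    hXmean hYmean hindep hgap
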